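/- arXiv:2508.17379 — 4 statements merged into one kernel-verified Lean document; each statement's English description precedes it below -/
import Mathlib

section
/- Let α ≥ 0 be a real number and let u₁, u₂ ≥ 0 be real numbers. Then (u₁^{1+α/2} − u₂^{1+α/2})² ≤ ((1 + α/2)² / (1 + α)) · (u₁^{1+α} − u₂^{1+α}) · (u₁ − u₂). -/
/-- `(u₁^{1+α/2} − u₂^{1+α/2})² ≤ ((1+α/2)²/(1+α)) (u₁^{1+α} − u₂^{1+α})(u₁ − u₂)`
for real `α ≥ 0` and `u₁, u₂ ≥ 0` (real powers of nonnegative reals). -/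
theorem half_power_difference_sq_le
    (α u₁ u₂ : ℝ) (hα : 0 ≤ α) (h₁ : 0 ≤ u₁) (h₂ : 0 ≤ u₂) :
    (u₁ ^ (1 + α / 2) - u₂ ^ (1 + α / 2)) ^ 2
      ≤ ((1 + α / 2) ^ 2 / (1 + α)) * ((u₁ ^ (1 + α) - u₂ ^ (1 + α)) * (u₁ - u₂)) := by
  wlog h : u₂ ≤ u₁ with H
  · have e1 : (u₁ ^ (1 + α/2) - u₂ ^ (1 + α/2))^2 = (u₂ ^ (1 + α/2) - u₁ ^ (1 + α/2))^2 := by ring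
    have e2 : (u₁ ^ (1 + α) - u₂ ^ (1 + α)) * (u₁ - u₂)
        = (u₂ ^ (1 + α) - u₁ ^ (1 + α)) * (u₂ - u₁) := by ring
    rw [e1, e2]
    exact H α u₂ u₁ hα h₂ h₁ (le_of_not_ge h)
  rcases eq_or_lt_of_le h with heq | hlt
  · rw [heq]; simp
  rw [add_comm 1 (α/2), add_comm 1 α]
  set δ : ℝ := u₁ - u₂ with hδdef
  have hδ : 0 < δ := sub_pos.mpr hlt
  set I : ℝ := (u₁ ^ (α + 1) - u₂ ^ (α + 1)) / (α + 1) with hIdef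
  have hα1 : (0:ℝ) < α + 1 := by linarith
  have hI : 0 < I := by
    apply div_pos _ hα1
    have := Real.rpow_lt_rpow h₂ hlt (by linarith : (0:ℝ) < α + 1)
    linarith
  set c : ℝ := Real.sqrt (I / δ) with hcdef
  have hc : 0 < c := Real.sqrt_pos.mpr (div_pos hI hδ)
  have hc2 : c ^ 2 = I / δ := Real.sq_sqrt (le_of_lt (div_pos hI hδ))
  have hint1 : ∫ t in u₂..u₁, t ^ (α/2) = (u₁ ^ (α/2 + 1) - u₂ ^ (α/2 + 1)) / (α/2 + 1) :=
    integral_rpow (Or.inl (by linarith))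
  have hint2 : ∫ t in u₂..u₁, t ^ α = (u₁ ^ (α + 1) - u₂ ^ (α + 1)) / (α + 1) :=
    integral_rpow (Or.inl (by linarith))
  set J : ℝ := ∫ t in u₂..u₁, t ^ (α/2) with hJdef
  have hJ0 : 0 ≤ J := by
    apply intervalIntegral.integral_nonneg h
    intro t ht
    exact Real.rpow_nonneg (le_trans h₂ ht.1) _
  have hintα : IntervalIntegrable (fun t : ℝ => t ^ α) MeasureTheory.volume u₂ u₁ :=
    intervalIntegral.intervalIntegrable_rpow (Or.inl hα)
  have key : J ≤ ∫ t in u₂..u₁, (t ^ α + c ^ 2) / (2 * c) := by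
    apply intervalIntegral.integral_mono_on h
      (intervalIntegral.intervalIntegrable_rpow (Or.inl (by linarith)))
      ((hintα.add intervalIntegrable_const).div_const _)
    intro t ht
    have ht0 : 0 ≤ t := le_trans h₂ ht.1
    have h1 : (t ^ (α/2)) ^ 2 = t ^ α := by
      rw [← Real.rpow_natCast (t ^ (α/2)) 2, ← Real.rpow_mul ht0]
      norm_num
    rw [le_div_iff₀ (by positivity)]
    nlinarith [sq_nonneg (t ^ (α/2) - c)]
  have hJle : J ≤ I / c := by
    have : (∫ t in u₂..u₁, (t ^ α + c ^ 2) / (2 * c))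
        = ((∫ t in u₂..u₁, t ^ α) + c ^ 2 * δ) / (2 * c) := by
      rw [show (fun t : ℝ => (t ^ α + c ^ 2) / (2 * c))
            = fun t : ℝ => (t ^ α + c ^ 2) / (2 * c) from rfl]
      rw [intervalIntegral.integral_div, intervalIntegral.integral_add hintα
        intervalIntegrable_const, intervalIntegral.integral_const]
      simp [hδdef, mul_comm]
    rw [this, hint2, ← hIdef, hc2] at key
    calc J ≤ (I + I / δ * δ) / (2 * c) := key
      _ = I / c := by field_simp; ring
  have hJ2 : J ^ 2 ≤ I * δ := by
    have h2' : J ^ 2 ≤ (I / c) ^ 2 := pow_le_pow_left₀ hJ0 hJle 2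
    have h3' : (I / c) ^ 2 = I * δ := by
      rw [div_pow, hc2]
      field_simp
    exact le_of_le_of_eq h2' h3'
  have hL : u₁ ^ (α/2 + 1) - u₂ ^ (α/2 + 1) = (α/2 + 1) * J := by
    rw [hint1]
    field_simp
  rw [hL, mul_pow]
  have hRHS : ((α/2 + 1) ^ 2 / (α + 1)) * ((u₁ ^ (α + 1) - u₂ ^ (α + 1)) * δ)
      = (α/2 + 1) ^ 2 * (I * δ) := by
    rw [hIdef]; field_simp; try ring
  rw [hRHS]
  exact mul_le_mul_of_nonneg_left hJ2 (by positivity)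
end

section
/- Let α ≥ 0 and M > 0 be real numbers, and let u₁, u₂ be real numbers with 0 ≤ u₁ ≤ M and 0 ≤ u₂ ≤ M. Then (u₁^{1+α} − u₂^{1+α})² ≤ (1+α) · M^α · (u₁^{1+α} − u₂^{1+α}) · (u₁ − u₂). -/
lemma rpow_sub_rpow_le_aux (α M y x : ℝ) (hα : 0 ≤ α) (hM : 0 < M)
    (hy : 0 ≤ y) (hxy : y ≤ x) (hxM : x ≤ M) :
    x ^ (1 + α) - y ^ (1 + α) ≤ (1 + α) * M ^ α * (x - y) := by
  rcases eq_or_lt_of_le hxy with rfl | h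
  · simp
  · have hderiv : ∀ t : ℝ, HasDerivAt (fun s : ℝ => s ^ (1 + α))
        ((1 + α) * t ^ α) t := by
      intro t
      have := Real.hasDerivAt_rpow_const (x := t) (p := 1 + α)
        (Or.inr (by linarith))
      simpa using this
    obtain ⟨c, hc, hceq⟩ := exists_hasDerivAt_eq_slope (fun s : ℝ => s ^ (1 + α))
      (fun t => (1 + α) * t ^ α) h
      (fun t _ => (hderiv t).continuousAt.continuousWithinAt)
      (fun t _ => hderiv t)
    have hc0 : 0 ≤ c := le_of_lt (lt_of_le_of_lt hy hc.1)
    have hcM : c ≤ M := le_trans (le_of_lt hc.2) hxM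
    have hslope : x ^ (1 + α) - y ^ (1 + α) = (1 + α) * c ^ α * (x - y) := by
      have hxy' : x - y ≠ 0 := sub_ne_zero.mpr (ne_of_gt h)
      field_simp at hceq
      linarith [hceq]
    rw [hslope]
    have hcm : c ^ α ≤ M ^ α := Real.rpow_le_rpow hc0 hcM hα
    have h1α : (0:ℝ) ≤ 1 + α := by linarith
    have hxy'' : 0 ≤ x - y := by linarith
    gcongr

/-- `(u₁^{1+α} − u₂^{1+α})² ≤ (1+α) M^α (u₁^{1+α} − u₂^{1+α})(u₁ − u₂)`
for real `α ≥ 0`, `M > 0` and `0 ≤ u₁, u₂ ≤ M` (real powers of nonnegative reals). -/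
theorem power_difference_sq_le_of_bounded
    (α M u₁ u₂ : ℝ) (hα : 0 ≤ α) (hM : 0 < M)
    (h₁ : 0 ≤ u₁) (h₁M : u₁ ≤ M) (h₂ : 0 ≤ u₂) (h₂M : u₂ ≤ M) :
    (u₁ ^ (1 + α) - u₂ ^ (1 + α)) ^ 2
      ≤ (1 + α) * M ^ α * ((u₁ ^ (1 + α) - u₂ ^ (1 + α)) * (u₁ - u₂)) := by
  rcases le_total u₂ u₁ with hle | hle
  · have hA : 0 ≤ u₁ ^ (1 + α) - u₂ ^ (1 + α) :=
      sub_nonneg.mpr (Real.rpow_le_rpow h₂ hle (by linarith))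
    have key := rpow_sub_rpow_le_aux α M u₂ u₁ hα hM h₂ hle h₁M
    nlinarith
  · have hA : 0 ≤ u₂ ^ (1 + α) - u₁ ^ (1 + α) :=
      sub_nonneg.mpr (Real.rpow_le_rpow h₁ hle (by linarith))
    have key := rpow_sub_rpow_le_aux α M u₁ u₂ hα hM h₁ hle h₂M
    nlinarith
end

section
/- Let α ≥ 0, let a₁, a₂ > 0, and let f : [0,∞)² → ℝ satisfy: there exists C > 0 such that for all (y₁,z₁), (y₂,z₂) ∈ [0,a₁] × [0,a₂], |f(y₁,z₁) − f(y₂,z₂)| ≤ C (|y₁^{1+α/2} − y₂^{1+α/2}| + |z₁ − z₂|). Then for all (u₁,v₁), (u₂,v₂) ∈ [0,a₁] × [0,a₂], (f(u₁,v₁) − f(u₂,v₂))² ≤ 2C² · ( ((1 + α/2)² / (1 + α)) · (u₁^{1+α} − u₂^{1+α})(u₁ − u₂) + (v₁ − v₂)² ). -/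
open MeasureTheory Set

-- Cauchy-Schwarz: (∫ h)^2 ≤ (a-b) * ∫ h^2 for h t = t^β on Ioc b a
private lemma cs_aux (β b a : ℝ) (hβ : 0 ≤ β) (hb : 0 ≤ b) (hba : b ≤ a) :
    (∫ t in Set.Ioc b a, t ^ β) ^ 2 ≤ (a - b) * ∫ t in Set.Ioc b a, t ^ (2*β) := by
  set μ := volume.restrict (Set.Ioc b a) with hμ
  have hfin : IsFiniteMeasure μ := by
    constructor
    rw [hμ, Measure.restrict_apply_univ]
    exact measure_Ioc_lt_top
  have hmeas : Measurable fun t : ℝ => t ^ β := by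
    exact (Real.continuous_rpow_const hβ).measurable
  have hnn : 0 ≤ᵐ[μ] fun t : ℝ => t ^ β := by
    rw [hμ]
    filter_upwards [ae_restrict_mem measurableSet_Ioc] with t ht
    exact Real.rpow_nonneg (le_trans hb ht.1.le) _
  have hmem : MemLp (fun t : ℝ => t ^ β) (ENNReal.ofReal 2) μ := by
    apply MemLp.of_bound hmeas.aestronglyMeasurable (a ^ β)
    rw [hμ]
    filter_upwards [ae_restrict_mem measurableSet_Ioc] with t ht
    rw [Real.norm_of_nonneg (Real.rpow_nonneg (le_trans hb ht.1.le) _)]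
    exact Real.rpow_le_rpow (le_trans hb ht.1.le) ht.2 hβ
  have hone : MemLp (fun _ : ℝ => (1:ℝ)) (ENNReal.ofReal 2) μ := memLp_const 1
  have hCS := integral_mul_le_Lp_mul_Lq_of_nonneg (Real.holderConjugate_iff_eq_conjExponent (by norm_num) |>.mpr (by norm_num) : Real.HolderConjugate 2 2) hnn (Filter.Eventually.of_forall fun _ => zero_le_one) hmem hone
  have hsq : ∀ t ∈ Set.Ioc b a, ((fun t : ℝ => t ^ β) t) ^ (2:ℝ) = t ^ (2*β) := by
    intro t ht
    rw [mul_comm]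
    exact (Real.rpow_mul (le_trans hb ht.1.le) β 2).symm
  have hint2 : ∫ t, ((fun t : ℝ => t ^ β) t) ^ (2:ℝ) ∂μ = ∫ t in Set.Ioc b a, t ^ (2*β) := by
    rw [hμ]
    exact setIntegral_congr_fun measurableSet_Ioc hsq
  have hone2 : ∫ t, ((fun _ : ℝ => (1:ℝ)) t) ^ (2:ℝ) ∂μ = a - b := by
    simp only [Real.one_rpow]
    rw [hμ, setIntegral_const, smul_eq_mul, mul_one, Real.volume_real_Ioc_of_le hba]
  simp only [mul_one] at hCS
  rw [hint2, hone2] at hCS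
  have hX : 0 ≤ ∫ t in Set.Ioc b a, t ^ (2*β) := by
    apply setIntegral_nonneg measurableSet_Ioc
    intro t ht
    exact Real.rpow_nonneg (le_trans hb ht.1.le) _
  have hab : (0:ℝ) ≤ a - b := by linarith
  rw [← Real.sqrt_eq_rpow, ← Real.sqrt_eq_rpow] at hCS
  have h2 : (∫ t in Set.Ioc b a, t ^ β) ^ 2 ≤ (Real.sqrt (∫ t in Set.Ioc b a, t ^ (2*β)) * Real.sqrt (a-b)) ^ 2 := by
    apply pow_le_pow_left₀ _ hCS
    apply setIntegral_nonneg measurableSet_Ioc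
    intro t ht
    exact Real.rpow_nonneg (le_trans hb ht.1.le) _
  rw [mul_pow, Real.sq_sqrt hX, Real.sq_sqrt hab] at h2
  linarith

private lemma key_rpow_ineq (α : ℝ) (hα : 0 ≤ α) (b a : ℝ) (hb : 0 ≤ b) (hba : b ≤ a) :
    (a ^ (1 + α/2) - b ^ (1 + α/2)) ^ 2
      ≤ (1 + α/2)^2 / (1 + α) * ((a ^ (1+α) - b ^ (1+α)) * (a - b)) := by
  have hγ : (0:ℝ) < 1 + α/2 := by linarith
  have h1α : (0:ℝ) < 1 + α := by linarith
  have hI := cs_aux (α/2) b a (by linarith) hb hba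
  rw [show 2*(α/2) = α by ring] at hI
  have e1 : ∫ t in Set.Ioc b a, t ^ (α/2) = (a ^ (1+α/2) - b ^ (1+α/2)) / (1+α/2) := by
    rw [← intervalIntegral.integral_of_le hba, integral_rpow (Or.inl (by linarith)),
      show (α/2 + 1 : ℝ) = 1 + α/2 by ring]
  have e2 : ∫ t in Set.Ioc b a, t ^ α = (a ^ (1+α) - b ^ (1+α)) / (1+α) := by
    rw [← intervalIntegral.integral_of_le hba, integral_rpow (Or.inl (by linarith)),
      show (α + 1 : ℝ) = 1 + α by ring]
  rw [e1, e2] at hI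
  rw [div_pow, div_le_iff₀ (by positivity)] at hI
  calc (a ^ (1 + α/2) - b ^ (1 + α/2)) ^ 2
      ≤ ((a - b) * ((a ^ (1+α) - b ^ (1+α)) / (1+α))) * (1 + α/2)^2 := hI
    _ = (1 + α/2)^2 / (1 + α) * ((a ^ (1+α) - b ^ (1+α)) * (a - b)) := by ring


/-- If `f` satisfies the finite `(1+α/2, 1)`-Lipschitz estimate with constant `C` on the
rectangle `[0,a₁] × [0,a₂]`, then the squared difference of `f` is controlled by the
degenerate quantity `(u₁^{1+α} − u₂^{1+α})(u₁ − u₂)` and `(v₁ − v₂)²`. -/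
theorem lipschitz_sq_estimate
    (α a₁ a₂ C : ℝ) (hα : 0 ≤ α) (ha₁ : 0 < a₁) (ha₂ : 0 < a₂) (hC : 0 < C)
    (f : ℝ → ℝ → ℝ)
    (hf : ∀ y₁ z₁ y₂ z₂ : ℝ,
      (y₁, z₁) ∈ Set.Icc (0:ℝ) a₁ ×ˢ Set.Icc (0:ℝ) a₂ →
      (y₂, z₂) ∈ Set.Icc (0:ℝ) a₁ ×ˢ Set.Icc (0:ℝ) a₂ →
      |f y₁ z₁ - f y₂ z₂| ≤ C * (|y₁ ^ (1 + α / 2) - y₂ ^ (1 + α / 2)| + |z₁ - z₂|)) :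
    ∀ u₁ v₁ u₂ v₂ : ℝ,
      (u₁, v₁) ∈ Set.Icc (0:ℝ) a₁ ×ˢ Set.Icc (0:ℝ) a₂ →
      (u₂, v₂) ∈ Set.Icc (0:ℝ) a₁ ×ˢ Set.Icc (0:ℝ) a₂ →
      (f u₁ v₁ - f u₂ v₂) ^ 2
        ≤ 2 * C ^ 2 * (((1 + α / 2) ^ 2 / (1 + α)) * ((u₁ ^ (1 + α) - u₂ ^ (1 + α)) * (u₁ - u₂))
            + (v₁ - v₂) ^ 2) := by
  intro u₁ v₁ u₂ v₂ h₁ h₂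
  have hu₁0 : (0:ℝ) ≤ u₁ := h₁.1.1
  have hu₂0 : (0:ℝ) ≤ u₂ := h₂.1.1
  have hbound := hf u₁ v₁ u₂ v₂ h₁ h₂
  set X : ℝ := |u₁ ^ (1 + α/2) - u₂ ^ (1 + α/2)| with hXdef
  set Y : ℝ := |v₁ - v₂| with hYdef
  have hX0 : 0 ≤ X := abs_nonneg _
  have hY0 : 0 ≤ Y := abs_nonneg _
  have hXsq : X ^ 2 ≤ (1 + α/2)^2 / (1 + α) * ((u₁ ^ (1+α) - u₂ ^ (1+α)) * (u₁ - u₂)) := by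
    rw [hXdef, sq_abs]
    rcases le_total u₂ u₁ with h | h
    · exact key_rpow_ineq α hα u₂ u₁ hu₂0 h
    · have hk := key_rpow_ineq α hα u₁ u₂ hu₁0 h
      nlinarith [hk]
  have hd2 : (f u₁ v₁ - f u₂ v₂) ^ 2 ≤ (C * (X + Y)) ^ 2 := by
    rw [← sq_abs (f u₁ v₁ - f u₂ v₂)]
    exact pow_le_pow_left₀ (abs_nonneg _) hbound 2
  have hY2 : Y ^ 2 = (v₁ - v₂) ^ 2 := by rw [hYdef, sq_abs]
  nlinarith [hd2, hXsq, sq_nonneg (X - Y), sq_nonneg C, mul_le_mul_of_nonneg_left hXsq (sq_nonneg C)]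
end

section
/- Let α ≥ 0 and ε > 0 be real numbers, let a, b ≥ 0 be real numbers, and let c be a real number. Then |c| · b^{1+α} · |a − b| ≤ ε · (a^{1+α} − b^{1+α})(a − b) + (b^{2+α} · c²) / (4ε). -/
/-- Young-type estimate absorbing the doubly degenerate weight `b^{1+α}`:
`|c| b^{1+α} |a − b| ≤ ε (a^{1+α} − b^{1+α})(a − b) + b^{2+α} c² / (4ε)`
for real `α ≥ 0`, `ε > 0`, `a, b ≥ 0` and `c ∈ ℝ` (real powers of nonnegative reals). -/
theorem young_degenerate_weight_estimate
    (α ε a b c : ℝ) (hα : 0 ≤ α) (hε : 0 < ε) (ha : 0 ≤ a) (hb : 0 ≤ b) :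
    |c| * b ^ (1 + α) * |a - b|
      ≤ ε * ((a ^ (1 + α) - b ^ (1 + α)) * (a - b)) + b ^ (2 + α) * c ^ 2 / (4 * ε) := by
  have hu : (0:ℝ) ≤ b ^ α := Real.rpow_nonneg hb α
  have hida : a ^ (1 + α) = a * a ^ α := by
    rw [Real.rpow_add_of_nonneg ha one_pos.le hα, Real.rpow_one]
  have hidb : b ^ (1 + α) = b * b ^ α := by
    rw [Real.rpow_add_of_nonneg hb one_pos.le hα, Real.rpow_one]
  have hidb2 : b ^ (2 + α) = b ^ 2 * b ^ α := by
    rw [Real.rpow_add_of_nonneg hb (by norm_num) hα]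
    norm_num [Real.rpow_natCast]
  -- monotonicity of t ↦ t^α
  have hmono : 0 ≤ (a ^ α - b ^ α) * (a - b) := by
    rcases le_total a b with h | h
    · have h' := Real.rpow_le_rpow ha h hα; nlinarith
    · have h' := Real.rpow_le_rpow hb h hα; nlinarith
  have h1 : b ^ α * (a - b) ^ 2 ≤ (a ^ (1 + α) - b ^ (1 + α)) * (a - b) := by
    rw [hida, hidb]
    nlinarith [mul_nonneg ha hmono]
  -- Young / AM-GM step
  have habs1 : |a - b| ^ 2 = (a - b) ^ 2 := sq_abs _
  have habs2 : |c| ^ 2 = c ^ 2 := sq_abs _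
  have hfe : (0:ℝ) < 4 * ε := by linarith
  have key' : 4 * ε * (|c| * (b * b ^ α) * |a - b|)
      ≤ 4 * ε * (ε * (b ^ α * (a - b) ^ 2)) + b ^ 2 * b ^ α * c ^ 2 := by
    rw [← habs1, ← habs2]
    nlinarith [mul_nonneg hu (sq_nonneg (2 * ε * |a - b| - b * |c|))]
  have h2 : |c| * b ^ (1 + α) * |a - b|
      ≤ ε * (b ^ α * (a - b) ^ 2) + b ^ (2 + α) * c ^ 2 / (4 * ε) := by
    rw [hidb, hidb2]
    calc |c| * (b * b ^ α) * |a - b|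
        = (4 * ε * (|c| * (b * b ^ α) * |a - b|)) / (4 * ε) := by field_simp
      _ ≤ (4 * ε * (ε * (b ^ α * (a - b) ^ 2)) + b ^ 2 * b ^ α * c ^ 2) / (4 * ε) :=
          (div_le_div_iff_of_pos_right hfe).2 key'
      _ = ε * (b ^ α * (a - b) ^ 2) + b ^ 2 * b ^ α * c ^ 2 / (4 * ε) := by
          field_simp
  calc |c| * b ^ (1 + α) * |a - b|
      ≤ ε * (b ^ α * (a - b) ^ 2) + b ^ (2 + α) * c ^ 2 / (4 * ε) := h2
    _ ≤ ε * ((a ^ (1 + α) - b ^ (1 + α)) * (a - b)) + b ^ (2 + α) * c ^ 2 / (4 * ε) := by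
        have := h1
        gcongr
end
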